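/- Fix constants Ū_L, Ū_R ∈ ℝᵐ (nodal arrays via the flux balance), weights ω₁,...,ω_L > 0 summing to 1 with ω₁ = ω_L, reals λ, α > 0 with λα ≤ ω₁, vectors U₁,...,U_L ∈ ℝᵐ (nodal values in the cell), boundary neighbor values U_L^ext, U_R^ext ∈ ℝᵐ, and a flux map F : ℝᵐ → ℝᵐ. Define the Lax–Friedrichs two-point average H_α(A,B) := (A+B)/2 − (F(B) − F(A))/(2α). Then the identity ∑_{ν=1}^L ων Uν − (λ/2)[F(U_L) + F(U_R^ext) − α(U_R^ext − U_L) − F(U_L^ext) − F(U₁) + α(U₁ − U_L^ext)] = ∑_{ν=2}^{L−1} ων Uν + (ω₁ − λα)U₁ + (ω_L − λα)U_L + λα H_α(U_L^ext, U_R^ext) + λα H_α(U₁, U_L) holds, and under λα ≤ ω₁ all coefficients on the right are nonnegative and sum to 1 (so the left-hand side is a convex combination of the listed states whenever λα ≤ ω₁). -/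

import Mathlib

/-!
Scaled by `λα`, the two-point average `H_α(A, B)` equals `(λα/2)(A + B) - (λ/2)(F B - F A)`.
The two averages `H_α(U_L^ext, U_R^ext)` and `H_α(U₁, U_L)` therefore reproduce the four flux
terms of the update, and their state parts account for the viscosity terms once `λα` is taken
from each endpoint weight. The coefficients then sum to `∑ ων = 1`, and `ω_L = ω₁ ≥ λα` makes
the endpoint ones nonnegative.
-/

theorem Finset.sum_univ_eq_sum_sdiff_pair_add {ι M : Type*} [Fintype ι] [DecidableEq ι]
    [AddCommMonoid M] {a b : ι} (hab : a ≠ b) (f : ι → M) :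
    ∑ i, f i = ∑ i ∈ univ \ {a, b}, f i + f a + f b := by
  rw [← sum_sdiff (subset_univ {a, b}), sum_pair hab, add_assoc]

section LaxFriedrichs

variable {E : Type*} [AddCommGroup E] [Module ℝ E]

/-- The Lax–Friedrichs two-point average `H_α(A, B)` of the flux `F`. -/
noncomputable def laxFriedrichsAverage (F : E → E) (α : ℝ) (A B : E) : E :=
  (2 : ℝ)⁻¹ • (A + B) - (2 * α)⁻¹ • (F B - F A)

theorem smul_laxFriedrichsAverage (F : E → E) {α : ℝ} (hα : α ≠ 0) (c : ℝ) (A B : E) :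
    (c * α) • laxFriedrichsAverage F α A B = (c * α / 2) • (A + B) - (c / 2) • (F B - F A) := by
  have hcoef : c * α * (2 * α)⁻¹ = c / 2 := by field_simp
  rw [laxFriedrichsAverage, smul_sub, smul_smul, smul_smul, hcoef, ← div_eq_mul_inv]

theorem laxFriedrichs_update_eq (F : E → E) {α : ℝ} (hα : α ≠ 0) (lam w₀ w₁ : ℝ)
    (S U₀ U₁ Vₗ Vᵣ : E) :
    S + w₀ • U₀ + w₁ • U₁
        - (lam / 2) • (F U₁ + F Vᵣ - α • (Vᵣ - U₁) - F Vₗ - F U₀ + α • (U₀ - Vₗ))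
      = S + (w₀ - lam * α) • U₀ + (w₁ - lam * α) • U₁
        + (lam * α) • laxFriedrichsAverage F α Vₗ Vᵣ
        + (lam * α) • laxFriedrichsAverage F α U₀ U₁ := by
  rw [smul_laxFriedrichsAverage F hα, smul_laxFriedrichsAverage F hα]
  module

end LaxFriedrichs

theorem LF_convex_decomposition_general {n m : ℕ}
    (ω : Fin (n + 2) → ℝ) (hsum : ∑ ν, ω ν = 1)
    (hωend : ω 0 = ω (Fin.last (n + 1)))
    (lam α : ℝ) (hα : 0 < α) (hCFL : lam * α ≤ ω 0)
    (U : Fin (n + 2) → Fin m → ℝ) (ULext URext : Fin m → ℝ)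
    (F : (Fin m → ℝ) → Fin m → ℝ) :
    let H : (Fin m → ℝ) → (Fin m → ℝ) → Fin m → ℝ :=
      fun A B => (2 : ℝ)⁻¹ • (A + B) - (2 * α)⁻¹ • (F B - F A)
    let UL : Fin m → ℝ := U (Fin.last (n + 1))
    (∑ ν, ω ν • U ν
        - (lam / 2) • (F UL + F URext - α • (URext - UL)
            - F ULext - F (U 0) + α • (U 0 - ULext))
      = (∑ ν ∈ Finset.univ \ {0, Fin.last (n + 1)}, ω ν • U ν)
        + (ω 0 - lam * α) • U 0 + (ω (Fin.last (n + 1)) - lam * α) • UL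
        + (lam * α) • H ULext URext + (lam * α) • H (U 0) UL) ∧
    (0 ≤ ω 0 - lam * α) ∧ (0 ≤ ω (Fin.last (n + 1)) - lam * α) ∧
    ((∑ ν ∈ Finset.univ \ {0, Fin.last (n + 1)}, ω ν)
        + (ω 0 - lam * α) + (ω (Fin.last (n + 1)) - lam * α)
        + lam * α + lam * α = 1) := by
  intro H UL
  have hends : (0 : Fin (n + 2)) ≠ Fin.last (n + 1) := Fin.last_pos'.ne
  refine ⟨?_, by linarith, by linarith, ?_⟩
  · rw [Finset.sum_univ_eq_sum_sdiff_pair_add hends]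
    exact laxFriedrichs_update_eq F hα.ne' lam _ _ _ _ _ _ _
  · rw [Finset.sum_univ_eq_sum_sdiff_pair_add hends] at hsum
    linarith

theorem LF_convex_decomposition {n m : ℕ}
    (ω : Fin (n + 2) → ℝ) (hω : ∀ ν, 0 < ω ν) (hsum : ∑ ν, ω ν = 1)
    (hωend : ω 0 = ω (Fin.last (n + 1)))
    (lam α : ℝ) (hlam : 0 < lam) (hα : 0 < α) (hCFL : lam * α ≤ ω 0)
    (U : Fin (n + 2) → Fin m → ℝ) (ULext URext : Fin m → ℝ)
    (F : (Fin m → ℝ) → Fin m → ℝ) :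
    let H : (Fin m → ℝ) → (Fin m → ℝ) → Fin m → ℝ :=
      fun A B => (2 : ℝ)⁻¹ • (A + B) - (2 * α)⁻¹ • (F B - F A)
    let UL : Fin m → ℝ := U (Fin.last (n + 1))
    (∑ ν, ω ν • U ν
        - (lam / 2) • (F UL + F URext - α • (URext - UL)
            - F ULext - F (U 0) + α • (U 0 - ULext))
      = (∑ ν ∈ Finset.univ \ {0, Fin.last (n + 1)}, ω ν • U ν)
        + (ω 0 - lam * α) • U 0 + (ω (Fin.last (n + 1)) - lam * α) • UL
        + (lam * α) • H ULext URext + (lam * α) • H (U 0) UL) ∧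
    (0 ≤ ω 0 - lam * α) ∧ (0 ≤ ω (Fin.last (n + 1)) - lam * α) ∧
    ((∑ ν ∈ Finset.univ \ {0, Fin.last (n + 1)}, ω ν)
        + (ω 0 - lam * α) + (ω (Fin.last (n + 1)) - lam * α)
        + lam * α + lam * α = 1) :=
  LF_convex_decomposition_general ω hsum hωend lam α hα hCFL U ULext URext F
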